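/- arXiv:1701.07915 — 3 statements merged into one kernel-verified Lean document; each statement's English description precedes it below -/
import Mathlib

section
/- For positive integers m and n: O(m+n+1, m+1) = 1 + ∑_{j=1}^{n} q^j ( O(m+j, j) + t·O(m+j−1, j−1) ), where O(a,b) is the over-(q,t)-binomial coefficient for overpartitions fitting inside the (a−b)×b rectangle. -/
/-!
An overpartition is a partition with some of its distinct part sizes overlined, so summing
`t ^ (number of overlined parts)` over the overpartitions with a given underlying partition gives
`(1 + t) ^ (number of distinct parts)`. Splitting the partitions in the `n × (m + 1)` box by
whether a part `n` occurs and removing one such part gives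
`O(n, m + 1) = O(n - 1, m + 1) + q ^ n * (O(n, m) + t * O(n - 1, m))`: the factor `1 + t` is lost
exactly when `n` then no longer occurs. Telescoping in `n` yields the identity with `O(j, m)` in
place of `O(m, j)`, and these agree because conjugating a partition swaps the two sides of the box
and preserves both its size and its number of distinct parts.
-/

open Finset Polynomial

/-- `overp m n k N` is the number of overpartitions of `N` with `k` overlined parts,
largest part `≤ m`, and at most `n` parts. An overpartition is a partition together
with a subset of its (distinct) part sizes which are overlined. -/
noncomputable def overp (m n k N : ℕ) : ℕ :=
  Nat.card {p : Nat.Partition N × Finset ℕ //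
    (∀ i ∈ p.1.parts, i ≤ m) ∧ Multiset.card p.1.parts ≤ n ∧
    p.2 ⊆ p.1.parts.toFinset ∧ p.2.card = k}

/-- The over-(q,t)-binomial coefficient for the `m × n` rectangle, evaluated at
elements `q t` of a commutative ring. -/
noncomputable def Oqt {R : Type*} [CommRing R] (q t : R) (m n : ℕ) : R :=
  ∑ N ∈ range (m * n + 1), ∑ k ∈ range (n + 1), (overp m n k N : R) * t ^ k * q ^ N

namespace Multiset

def countGE (s : Multiset ℕ) (i : ℕ) : ℕ := card (s.filter (i ≤ ·))

lemma countGE_antitone (s : Multiset ℕ) : Antitone s.countGE := fun _ _ hij =>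
  card_le_card (monotone_filter_right s fun _ ha => le_trans hij ha)

lemma countGE_eq_count_add (s : Multiset ℕ) (v : ℕ) :
    s.countGE v = s.count v + s.countGE (v + 1) := by
  induction s using Multiset.induction_on with
  | empty => simp [countGE]
  | cons a s ih =>
    simp only [countGE, filter_cons, count_cons, card_add, apply_ite card, card_singleton,
      card_zero] at *
    split_ifs <;> omega

lemma countGE_pos_of_mem {s : Multiset ℕ} {v : ℕ} (hv : v ∈ s) : 0 < s.countGE v :=
  card_pos_iff_exists_mem.2 ⟨v, mem_filter.2 ⟨hv, le_rfl⟩⟩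

lemma countGE_le_card (s : Multiset ℕ) (v : ℕ) : s.countGE v ≤ card s :=
  card_le_card (filter_le _ s)

lemma countGE_le_sum (s : Multiset ℕ) {v : ℕ} (hv : 1 ≤ v) : s.countGE v ≤ s.sum := by
  calc s.countGE v = card (s.filter (v ≤ ·)) • 1 := by simp [countGE]
    _ ≤ (s.filter (v ≤ ·)).sum := card_nsmul_le_sum fun a ha => hv.trans (of_mem_filter ha)
    _ ≤ (s.filter (v ≤ ·)).sum + (s.filter (¬ v ≤ ·)).sum := Nat.le_add_right _ _
    _ = s.sum := by rw [← sum_add, filter_add_not]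

lemma countGE_eq_zero_of_sum_lt {s : Multiset ℕ} {v : ℕ} (hv : s.sum < v) :
    s.countGE v = 0 :=
  card_eq_zero.2 <| filter_eq_nil.2 fun a ha h => absurd (le_sum_of_mem ha) (by omega)

lemma sum_countGE {s : Multiset ℕ} {B : ℕ} (hB : ∀ a ∈ s, a ≤ B) :
    ∑ i ∈ Finset.Icc 1 B, s.countGE i = s.sum := by
  induction s using Multiset.induction_on with
  | empty => simp [countGE]
  | cons a s ih =>
    have hcons : ∀ i, (a ::ₘ s).countGE i = s.countGE i + if i ≤ a then 1 else 0 := by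
      intro i
      simp only [countGE, filter_cons, apply_ite card, card_add, card_singleton, card_zero]
      split_ifs <;> omega
    have hfilter : (Finset.Icc 1 B).filter (· ≤ a) = Finset.Icc 1 a := by
      ext i
      simp only [Finset.mem_filter, Finset.mem_Icc]
      have := hB a (mem_cons_self a s)
      omega
    rw [sum_cons, Finset.sum_congr rfl fun i _ => hcons i, Finset.sum_add_distrib,
      ih fun x hx => hB x (mem_cons_of_mem hx), Finset.sum_boole, hfilter, Nat.card_Icc]
    simp only [Nat.cast_id, add_tsub_cancel_right]
    omega

/-- The conjugate partition: its parts are the column lengths `s.countGE i`, `i ≥ 1`, of the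
Young diagram of `s`. -/
def conjugate (s : Multiset ℕ) : Multiset ℕ :=
  ((Finset.Icc 1 s.sum).val.map s.countGE).filter (0 < ·)

lemma pos_of_mem_conjugate {s : Multiset ℕ} {a : ℕ} (ha : a ∈ s.conjugate) : 0 < a :=
  (mem_filter.1 ha).2

lemma mem_conjugate {s : Multiset ℕ} {a : ℕ} :
    a ∈ s.conjugate ↔ (∃ i ∈ Finset.Icc 1 s.sum, s.countGE i = a) ∧ 0 < a := by
  simp [conjugate]

lemma card_conjugate (s : Multiset ℕ) :
    card s.conjugate = #{i ∈ Finset.Icc 1 s.sum | 0 < s.countGE i} := by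
  rw [conjugate, filter_map, card_map]
  rfl

lemma countGE_conjugate (s : Multiset ℕ) {v : ℕ} (hv : 1 ≤ v) :
    s.conjugate.countGE v = #{i ∈ Finset.Icc 1 s.sum | v ≤ s.countGE i} := by
  rw [countGE, conjugate, filter_filter,
    filter_congr (q := (v ≤ ·)) fun x _ => by omega, filter_map, card_map]
  rfl

lemma sum_conjugate (s : Multiset ℕ) : s.conjugate.sum = s.sum := by
  have hzero : (((Finset.Icc 1 s.sum).val.map s.countGE).filter (¬ 0 < ·)).sum = 0 :=
    sum_eq_zero fun x hx => by have := (mem_filter.1 hx).2; omega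
  have := congrArg sum (filter_add_not (0 < ·) ((Finset.Icc 1 s.sum).val.map s.countGE))
  rw [sum_add, hzero, add_zero] at this
  rw [conjugate, this]
  exact sum_countGE fun a ha => le_sum_of_mem ha

lemma le_of_mem_conjugate {s : Multiset ℕ} {a : ℕ} (ha : a ∈ s.conjugate) : a ≤ card s := by
  obtain ⟨⟨i, _, rfl⟩, _⟩ := mem_conjugate.1 ha
  exact countGE_le_card s i

lemma card_conjugate_le {s : Multiset ℕ} {m : ℕ} (hm : ∀ a ∈ s, a ≤ m) :
    card s.conjugate ≤ m := by
  rw [card_conjugate]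
  calc _ ≤ #(Finset.Icc 1 m) := Finset.card_le_card fun i hi => by
        rw [Finset.mem_filter, Finset.mem_Icc] at hi
        obtain ⟨a, ha⟩ := card_pos_iff_exists_mem.1 hi.2
        exact Finset.mem_Icc.2
          ⟨hi.1.1, (of_mem_filter ha).trans (hm a (mem_of_mem_filter ha))⟩
    _ = m := by simp

lemma le_card_filter_le_countGE_iff (s : Multiset ℕ) {i v : ℕ} (hi : 1 ≤ i) (hv : 1 ≤ v) :
    v ≤ #{j ∈ Finset.Icc 1 s.sum | i ≤ s.countGE j} ↔ i ≤ s.countGE v := by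
  constructor
  · intro h
    by_contra! hlt
    have hsub : {j ∈ Finset.Icc 1 s.sum | i ≤ s.countGE j} ⊆ Finset.Icc 1 (v - 1) := fun j hj => by
      rw [Finset.mem_filter, Finset.mem_Icc] at hj
      refine Finset.mem_Icc.2 ⟨hj.1.1, ?_⟩
      by_contra! hvj
      exact absurd (hj.2.trans (s.countGE_antitone (by omega : v ≤ j))) (by omega)
    have := Finset.card_le_card hsub
    rw [Nat.card_Icc] at this
    omega
  · intro h
    have hvsum : v ≤ s.sum := by
      by_contra! hlt
      rw [countGE_eq_zero_of_sum_lt hlt] at h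
      omega
    calc v = #(Finset.Icc 1 v) := by simp
      _ ≤ _ := Finset.card_le_card fun j hj => by
        rw [Finset.mem_Icc] at hj
        exact Finset.mem_filter.2
          ⟨Finset.mem_Icc.2 ⟨hj.1, hj.2.trans hvsum⟩, h.trans (s.countGE_antitone hj.2)⟩

lemma countGE_conjugate_conjugate (s : Multiset ℕ) {v : ℕ} (hv : 1 ≤ v) :
    s.conjugate.conjugate.countGE v = s.countGE v := by
  have hfilter : {i ∈ Finset.Icc 1 s.sum | v ≤ s.conjugate.countGE i} = Finset.Icc 1 (s.countGE v) := by
    ext i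
    rw [Finset.mem_filter, Finset.mem_Icc, Finset.mem_Icc]
    have := countGE_le_sum s hv
    constructor
    · rintro ⟨⟨hi, _⟩, hvi⟩
      rw [countGE_conjugate s hi, le_card_filter_le_countGE_iff s hi hv] at hvi
      exact ⟨hi, hvi⟩
    · rintro ⟨hi, hiv⟩
      rw [countGE_conjugate s hi, le_card_filter_le_countGE_iff s hi hv]
      exact ⟨⟨hi, by omega⟩, hiv⟩
  rw [countGE_conjugate _ hv, sum_conjugate, hfilter, Nat.card_Icc, add_tsub_cancel_right]

lemma conjugate_conjugate {s : Multiset ℕ} (hs : ∀ a ∈ s, 0 < a) :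
    s.conjugate.conjugate = s := by
  ext a
  rcases Nat.eq_zero_or_pos a with rfl | ha
  · rw [count_eq_zero.2 fun h => (pos_of_mem_conjugate h).ne' rfl,
      count_eq_zero.2 fun h => (hs 0 h).ne' rfl]
  · have h1 := countGE_eq_count_add s.conjugate.conjugate a
    have h2 := countGE_eq_count_add s a
    rw [countGE_conjugate_conjugate s ha, countGE_conjugate_conjugate s (by omega)] at h1
    omega

lemma card_toFinset_le_card_toFinset_conjugate {s : Multiset ℕ} (hs : ∀ a ∈ s, 0 < a) :
    s.toFinset.card ≤ s.conjugate.toFinset.card := by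
  have hstrict : ∀ v ∈ s, ∀ w, v < w → s.countGE w < s.countGE v := fun v hv w hvw => by
    have := countGE_eq_count_add s v
    have := s.countGE_antitone (show v + 1 ≤ w by omega)
    have := one_le_count_iff_mem.2 hv
    omega
  refine card_le_card_of_injOn s.countGE (fun v hv => ?_) fun v hv w hw hvw => ?_
  · rw [Finset.mem_coe, mem_toFinset] at hv
    rw [Finset.mem_coe, mem_toFinset, mem_conjugate]
    exact ⟨⟨v, Finset.mem_Icc.2 ⟨hs v hv, le_sum_of_mem hv⟩, rfl⟩, countGE_pos_of_mem hv⟩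
  · rw [Finset.mem_coe, mem_toFinset] at hv hw
    by_contra hne
    rcases Nat.lt_or_gt_of_ne hne with hlt | hlt
    · exact (hstrict v hv w hlt).ne' hvw
    · exact (hstrict w hw v hlt).ne hvw

lemma card_toFinset_conjugate {s : Multiset ℕ} (hs : ∀ a ∈ s, 0 < a) :
    s.conjugate.toFinset.card = s.toFinset.card := by
  refine le_antisymm ?_ (card_toFinset_le_card_toFinset_conjugate hs)
  have := card_toFinset_le_card_toFinset_conjugate fun _ => pos_of_mem_conjugate (s := s)
  rwa [conjugate_conjugate hs] at this

end Multiset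

def boxPartitions (a b N : ℕ) : Finset (Nat.Partition N) :=
  univ.filter fun l => (∀ i ∈ l.parts, i ≤ a) ∧ Multiset.card l.parts ≤ b

def partitionBox (a b : ℕ) : Finset (Multiset ℕ) :=
  (range (a * b + 1)).biUnion fun N => (boxPartitions a b N).image Nat.Partition.parts

lemma mem_partitionBox {a b : ℕ} {s : Multiset ℕ} :
    s ∈ partitionBox a b ↔ (∀ i ∈ s, 0 < i ∧ i ≤ a) ∧ Multiset.card s ≤ b := by
  simp only [partitionBox, boxPartitions, mem_biUnion, mem_image, mem_range, mem_filter,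
    mem_univ, true_and]
  constructor
  · rintro ⟨N, -, l, ⟨hla, hlb⟩, rfl⟩
    exact ⟨fun i hi => ⟨l.parts_pos hi, hla i hi⟩, hlb⟩
  · rintro ⟨hs, hcard⟩
    have hsum : s.sum ≤ a * b := calc
      s.sum ≤ Multiset.card s • a := Multiset.sum_le_card_nsmul _ _ fun i hi => (hs i hi).2
      _ ≤ a * b := by rw [smul_eq_mul, mul_comm]; exact Nat.mul_le_mul_left a hcard
    exact ⟨s.sum, Nat.lt_succ_of_le hsum, ⟨s, fun hi => (hs _ hi).1, rfl⟩,
      ⟨fun i hi => (hs i hi).2, hcard⟩, rfl⟩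

lemma partitionBox_zero_left (b : ℕ) : partitionBox 0 b = {0} := by
  ext s
  rw [mem_partitionBox, mem_singleton]
  constructor
  · rintro ⟨hs, -⟩
    exact Multiset.eq_zero_of_forall_notMem fun i hi => by have := hs i hi; omega
  · rintro rfl
    simp

lemma filter_notMem_partitionBox (a b : ℕ) :
    (partitionBox (a + 1) b).filter (a + 1 ∉ ·) = partitionBox a b := by
  ext s
  simp only [mem_filter, mem_partitionBox]
  constructor
  · rintro ⟨⟨hs, hcard⟩, hnot⟩
    refine ⟨fun i hi => ⟨(hs i hi).1, ?_⟩, hcard⟩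
    have := (hs i hi).2
    have : i ≠ a + 1 := fun h => hnot (h ▸ hi)
    omega
  · rintro ⟨hs, hcard⟩
    exact ⟨⟨fun i hi => ⟨(hs i hi).1, (hs i hi).2.trans a.le_succ⟩, hcard⟩,
      fun hmem => by have := (hs _ hmem).2; omega⟩

lemma sum_filter_mem_partitionBox {M : Type*} [AddCommMonoid M] (f : Multiset ℕ → M)
    (a b : ℕ) :
    ∑ s ∈ (partitionBox (a + 1) (b + 1)).filter (a + 1 ∈ ·), f s =
      ∑ u ∈ partitionBox (a + 1) b, f ((a + 1) ::ₘ u) := by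
  refine (sum_nbij' ((a + 1) ::ₘ ·) (·.erase (a + 1)) (fun u hu => ?_) (fun s hs => ?_)
    (fun u _ => Multiset.erase_cons_head _ _) (fun s hs => ?_) fun _ _ => rfl).symm
  · rw [mem_partitionBox] at hu
    rw [mem_filter, mem_partitionBox, Multiset.card_cons]
    refine ⟨⟨fun i hi => ?_, by omega⟩, Multiset.mem_cons_self _ _⟩
    rcases Multiset.mem_cons.1 hi with rfl | hi
    · omega
    · exact hu.1 i hi
  · rw [mem_filter, mem_partitionBox] at hs
    rw [mem_partitionBox, Multiset.card_erase_of_mem hs.2, Nat.pred_eq_sub_one]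
    exact ⟨fun i hi => hs.1.1 i (Multiset.mem_of_mem_erase hi), by have := hs.1.2; omega⟩
  · exact Multiset.cons_erase (mem_filter.1 hs).2

lemma overp_eq_sum_choose (a b k N : ℕ) :
    overp a b k N = ∑ l ∈ boxPartitions a b N, l.parts.toFinset.card.choose k := by
  let overlinings := (boxPartitions a b N).sigma fun l => powersetCard k l.parts.toFinset
  have e : {p : Nat.Partition N × Finset ℕ // (∀ i ∈ p.1.parts, i ≤ a) ∧
      Multiset.card p.1.parts ≤ b ∧ p.2 ⊆ p.1.parts.toFinset ∧ p.2.card = k} ≃ overlinings :=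
    { toFun := fun p => ⟨⟨p.1.1, p.1.2⟩, by
        simpa [overlinings, boxPartitions, and_assoc] using p.2⟩
      invFun := fun x => ⟨(x.1.1, x.1.2), by
        simpa [overlinings, boxPartitions, and_assoc] using x.2⟩
      left_inv := fun _ => rfl
      right_inv := fun _ => rfl }
  rw [overp, Nat.card_congr e, Nat.card_eq_fintype_card, Fintype.card_coe, card_sigma]
  simp only [card_powersetCard]

lemma pos_of_mem_partitionBox {a b : ℕ} {s : Multiset ℕ} (hs : s ∈ partitionBox a b) :
    ∀ i ∈ s, 0 < i :=
  fun i hi => ((mem_partitionBox.1 hs).1 i hi).1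

lemma conjugate_mem_partitionBox {a b : ℕ} {s : Multiset ℕ} (hs : s ∈ partitionBox a b) :
    s.conjugate ∈ partitionBox b a := by
  rw [mem_partitionBox] at hs ⊢
  exact ⟨fun i hi => ⟨Multiset.pos_of_mem_conjugate hi,
    (Multiset.le_of_mem_conjugate hi).trans hs.2⟩,
    Multiset.card_conjugate_le fun i hi => (hs.1 i hi).2⟩

section Oqt

variable {R : Type*} [CommRing R] (q t : R)

def overWeight (s : Multiset ℕ) : R :=
  (1 + t) ^ s.toFinset.card * q ^ s.sum

lemma overWeight_cons (i : ℕ) (s : Multiset ℕ) :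
    overWeight q t (i ::ₘ s) =
      q ^ i * (overWeight q t s + t * if i ∉ s then overWeight q t s else 0) := by
  unfold overWeight
  rw [Multiset.toFinset_cons, Multiset.sum_cons, pow_add]
  by_cases hi : i ∈ s
  · rw [Finset.insert_eq_of_mem (Multiset.mem_toFinset.2 hi), if_neg (not_not.2 hi)]
    ring
  · rw [Finset.card_insert_of_notMem (mt Multiset.mem_toFinset.1 hi), if_pos hi]
    ring

lemma overWeight_conjugate {s : Multiset ℕ} (hs : ∀ a ∈ s, 0 < a) :
    overWeight q t s.conjugate = overWeight q t s := by
  rw [overWeight, overWeight, Multiset.card_toFinset_conjugate hs, Multiset.sum_conjugate]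

lemma sum_choose_mul_pow {d b : ℕ} (hd : d ≤ b) :
    ∑ k ∈ range (b + 1), (d.choose k : R) * t ^ k = (1 + t) ^ d := by
  rw [add_comm 1 t, add_pow, ← sum_subset (range_subset_range.2 (by omega : d + 1 ≤ b + 1))]
  · exact sum_congr rfl fun k _ => by ring
  · intro k _ hk
    rw [Nat.choose_eq_zero_of_lt (by simpa using hk), Nat.cast_zero, zero_mul]

lemma Oqt_eq_sum_overWeight (a b : ℕ) :
    Oqt q t a b = ∑ s ∈ partitionBox a b, overWeight q t s := by
  have hdisj : (range (a * b + 1) : Set ℕ).PairwiseDisjoint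
      fun N => (boxPartitions a b N).image Nat.Partition.parts := by
    intro N _ M _ hNM
    refine Finset.disjoint_left.2 fun s hN hM => hNM ?_
    obtain ⟨l, -, rfl⟩ := mem_image.1 hN
    obtain ⟨l', -, hl'⟩ := mem_image.1 hM
    rw [← l.parts_sum, ← l'.parts_sum, hl']
  rw [Oqt, partitionBox, sum_biUnion hdisj]
  refine sum_congr rfl fun N _ => ?_
  rw [sum_image fun l _ l' _ h => Nat.Partition.ext h]
  simp only [overp_eq_sum_choose, Nat.cast_sum, sum_mul]
  rw [sum_comm]
  refine sum_congr rfl fun l hl => ?_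
  have hcard : l.parts.toFinset.card ≤ b :=
    (Multiset.toFinset_card_le _).trans (mem_filter.1 hl).2.2
  rw [overWeight, l.parts_sum, ← sum_choose_mul_pow t hcard, sum_mul]

lemma Oqt_zero_left (b : ℕ) : Oqt q t 0 b = 1 := by
  simp [Oqt_eq_sum_overWeight, partitionBox_zero_left, overWeight]

lemma Oqt_succ_succ (a b : ℕ) :
    Oqt q t (a + 1) (b + 1) =
      Oqt q t a (b + 1) + q ^ (a + 1) * (Oqt q t (a + 1) b + t * Oqt q t a b) := by
  simp only [Oqt_eq_sum_overWeight]
  rw [← sum_filter_not_add_sum_filter _ (a + 1 ∈ ·), filter_notMem_partitionBox,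
    sum_filter_mem_partitionBox]
  simp only [overWeight_cons, ← mul_sum, sum_add_distrib, ← sum_filter,
    filter_notMem_partitionBox]

lemma Oqt_comm (a b : ℕ) : Oqt q t a b = Oqt q t b a := by
  simp only [Oqt_eq_sum_overWeight]
  exact sum_nbij' Multiset.conjugate Multiset.conjugate
    (fun _ => conjugate_mem_partitionBox) (fun _ => conjugate_mem_partitionBox)
    (fun _ hs => Multiset.conjugate_conjugate (pos_of_mem_partitionBox hs))
    (fun _ hs => Multiset.conjugate_conjugate (pos_of_mem_partitionBox hs))
    fun _ hs => (overWeight_conjugate q t (pos_of_mem_partitionBox hs)).symm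

lemma Oqt_eq_one_add_sum (n b : ℕ) :
    Oqt q t n (b + 1) = 1 + ∑ j ∈ Icc 1 n, q ^ j * (Oqt q t j b + t * Oqt q t (j - 1) b) := by
  induction n with
  | zero => simp [Oqt_zero_left]
  | succ n ih =>
    rw [Oqt_succ_succ, ih, sum_Icc_succ_top (by omega), Nat.add_sub_cancel]
    ring

end Oqt

theorem stmt7_general {R : Type*} [CommRing R] (q t : R) (m n : ℕ) :
    Oqt q t n (m + 1) = 1 + ∑ j ∈ Icc 1 n, q ^ j * (Oqt q t m j + t * Oqt q t m (j - 1)) := by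
  rw [Oqt_eq_one_add_sum]
  simp only [Oqt_comm q t m]

theorem stmt7 {R : Type*} [CommRing R] (q t : R) (m n : ℕ) (hm : 0 < m) (hn : 0 < n) :
    Oqt q t n (m + 1) = 1 + ∑ j ∈ Icc 1 n, q ^ j * (Oqt q t m j + t * Oqt q t m (j - 1)) :=
  stmt7_general q t m n
end

section
/- For non-negative integers m, n: D(m,n) = ∑_{k=0}^{min(m,n)} 2^k · C(m,k) · C(n,k), where D is the Delannoy number and C the binomial coefficient. -/
/-!
Both sides equal `1` on the boundary `m = 0` or `n = 0`, so it suffices that the sum satisfies the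
Delannoy recurrence. Applying Pascal's rule to both binomials of each summand `2 ^ k C(m,k) C(n,k)`
gives that recurrence summand by summand, after shifting the index by one.
-/

open Finset

/-- The Delannoy numbers. -/
def D : ℕ → ℕ → ℕ
  | 0, _ => 1
  | _ + 1, 0 => 1
  | m + 1, n + 1 => D m (n + 1) + D (m + 1) n + D m n

def delannoyTerm (m n k : ℕ) : ℕ := 2 ^ k * m.choose k * n.choose k

def delannoySum (m n : ℕ) : ℕ := ∑ k ∈ range (min m n + 1), delannoyTerm m n k

lemma delannoyTerm_succ_succ (m n k : ℕ) :
    delannoyTerm (m + 1) (n + 1) (k + 1) + delannoyTerm m n (k + 1) =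
      delannoyTerm m (n + 1) (k + 1) + delannoyTerm (m + 1) n (k + 1) + 2 * delannoyTerm m n k := by
  simp only [delannoyTerm, Nat.choose_succ_succ', pow_succ]
  ring

lemma delannoyTerm_eq_zero_of_min_lt {m n k : ℕ} (h : min m n < k) : delannoyTerm m n k = 0 := by
  rcases min_lt_iff.mp h with hm | hn
  · simp [delannoyTerm, Nat.choose_eq_zero_of_lt hm]
  · simp [delannoyTerm, Nat.choose_eq_zero_of_lt hn]

lemma delannoySum_eq_sum_range {m n N : ℕ} (h : min m n ≤ N) :
    delannoySum m n = ∑ k ∈ range (N + 1), delannoyTerm m n k := by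
  refine sum_subset (range_subset_range.mpr (by omega)) fun k _ hk => ?_
  exact delannoyTerm_eq_zero_of_min_lt (by simp only [mem_range] at hk; omega)

lemma delannoySum_zero_left (n : ℕ) : delannoySum 0 n = 1 := by
  simp [delannoySum, delannoyTerm]

lemma delannoySum_zero_right (m : ℕ) : delannoySum m 0 = 1 := by
  simp [delannoySum, delannoyTerm]

lemma delannoySum_succ_succ (m n : ℕ) :
    delannoySum (m + 1) (n + 1) = delannoySum m (n + 1) + delannoySum (m + 1) n + delannoySum m n := by
  have shift : ∀ a b, min a b ≤ n + 1 →
      delannoySum a b = ∑ k ∈ range (n + 1), delannoyTerm a b (k + 1) + 1 := fun a b h => by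
    simp [delannoySum_eq_sum_range h, sum_range_succ', delannoyTerm]
  have termwise := sum_congr rfl fun k (_ : k ∈ range (n + 1)) => delannoyTerm_succ_succ m n k
  simp only [sum_add_distrib, ← mul_sum] at termwise
  rw [← delannoySum_eq_sum_range (min_le_right m n)] at termwise
  rw [shift (m + 1) (n + 1) (by omega), shift m (n + 1) (by omega), shift (m + 1) n (by omega)]
  have := shift m n (by omega)
  omega

theorem stmt13 (m n : ℕ) :
    D m n = ∑ k ∈ range (min m n + 1), 2 ^ k * Nat.choose m k * Nat.choose n k := by
  change D m n = delannoySum m n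
  induction m generalizing n with
  | zero => rw [D, delannoySum_zero_left]
  | succ m ihm =>
    induction n with
    | zero => rw [D, delannoySum_zero_right]
    | succ n ihn => rw [D, ihm, ihn, ihm, delannoySum_succ_succ]
end

section
/- For all integers n > k > 0, the Delannoy numbers satisfy the log-concavity inequalities D(n,k)^2 ≥ D(n+1, k−1)·D(n−1, k+1) and D(n,k)^2 ≥ D(n, k−1)·D(n, k+1). -/
/-!
Write `r i j = D i (j + 1) / D i j`. By induction on the row `i` we show that every row is
log-concave (`r i` decreases in `j`) and that the ratios grow from one row to the next
(`r i j ≤ r (i + 1) j`: the adjacent `2 × 2` minors of the Delannoy array are nonnegative).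
Together these give the shifted comparison `r i (j + 1) ≤ r (i + 1) j`, and substituting the
recurrence into it carries both properties from row `i` to row `i + 1`, and the minor inequality
from column `j` to column `j + 1`. The anti-diagonal inequality comes out of the shifted
comparison for two consecutive rows, again through the recurrence.
-/

theorem D_zero_left (n : ℕ) : D 0 n = 1 := by
  rw [D]

theorem D_zero_right (m : ℕ) : D m 0 = 1 := by
  cases m <;> rw [D]

theorem D_succ_succ (m n : ℕ) : D (m + 1) (n + 1) = D m (n + 1) + D (m + 1) n + D m n := by
  rw [D]

theorem D_pos (m n : ℕ) : 0 < D m n := by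
  induction m generalizing n with
  | zero => simp [D_zero_left]
  | succ m ih =>
    cases n with
    | zero => simp [D_zero_right]
    | succ n => rw [D_succ_succ]; have := ih (n + 1); omega

theorem D_one_left (n : ℕ) : D 1 n = 2 * n + 1 := by
  induction n with
  | zero => rw [D_zero_right]
  | succ n ih => rw [D_succ_succ, ih, D_zero_left, D_zero_left]; ring

theorem D_one_right (m : ℕ) : D m 1 = 2 * m + 1 := by
  induction m with
  | zero => rw [D_zero_left]
  | succ m ih => rw [D_succ_succ, ih, D_zero_right, D_zero_right]; ring

section Step

variable {i j : ℕ}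
  (hrow : D i j * D i (j + 2) ≤ D i (j + 1) ^ 2)
  (hminor : D i (j + 1) * D (i + 1) j ≤ D i j * D (i + 1) (j + 1))
include hrow hminor

theorem D_shifted_minor_le : D (i + 1) j * D i (j + 2) ≤ D (i + 1) (j + 1) * D i (j + 1) := by
  refine le_of_mul_le_mul_left ?_ (D_pos i (j + 1))
  calc D i (j + 1) * (D (i + 1) j * D i (j + 2))
      = D i (j + 1) * D (i + 1) j * D i (j + 2) := by ring
    _ ≤ D i j * D (i + 1) (j + 1) * D i (j + 2) := by gcongr
    _ = D (i + 1) (j + 1) * (D i j * D i (j + 2)) := by ring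
    _ ≤ D (i + 1) (j + 1) * D i (j + 1) ^ 2 := by gcongr
    _ = D i (j + 1) * (D (i + 1) (j + 1) * D i (j + 1)) := by ring

theorem D_mul_le_sq_row_succ : D (i + 1) j * D (i + 1) (j + 2) ≤ D (i + 1) (j + 1) ^ 2 := by
  linear_combination D_shifted_minor_le hrow hminor + hminor
    + D (i + 1) j * D_succ_succ i (j + 1) - D (i + 1) (j + 1) * D_succ_succ i j

theorem D_minor_le_succ :
    D i (j + 2) * D (i + 1) (j + 1) ≤ D i (j + 1) * D (i + 1) (j + 2) := by
  linear_combination D_shifted_minor_le hrow hminor + hrow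
    + D i (j + 2) * D_succ_succ i j - D i (j + 1) * D_succ_succ i (j + 1)

end Step

theorem D_mul_le_sq_row_and_minor_le (i j : ℕ) :
    D i j * D i (j + 2) ≤ D i (j + 1) ^ 2 ∧
      D i (j + 1) * D (i + 1) j ≤ D i j * D (i + 1) (j + 1) := by
  induction i generalizing j with
  | zero =>
    simp only [zero_add, D_zero_left, D_one_left]
    omega
  | succ i ih =>
    have hrow (j : ℕ) := D_mul_le_sq_row_succ (ih j).1 (ih j).2
    refine ⟨hrow j, ?_⟩
    induction j with
    | zero => simp only [zero_add, D_zero_right, D_one_right]; omega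
    | succ j ihj => exact D_minor_le_succ (hrow j) ihj

theorem D_mul_le_sq_row (i j : ℕ) : D i j * D i (j + 2) ≤ D i (j + 1) ^ 2 :=
  (D_mul_le_sq_row_and_minor_le i j).1

theorem D_minor_le (i j : ℕ) : D i (j + 1) * D (i + 1) j ≤ D i j * D (i + 1) (j + 1) :=
  (D_mul_le_sq_row_and_minor_le i j).2

theorem D_mul_le_sq_antidiag (i j : ℕ) :
    D (i + 2) j * D i (j + 2) ≤ D (i + 1) (j + 1) ^ 2 := by
  have h₀ := D_shifted_minor_le (D_mul_le_sq_row i j) (D_minor_le i j)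
  have h₁ : D (i + 2) j * D (i + 1) (j + 2) ≤ D (i + 2) (j + 1) * D (i + 1) (j + 1) :=
    D_shifted_minor_le (D_mul_le_sq_row (i + 1) j) (D_minor_le (i + 1) j)
  rw [D_succ_succ i (j + 1), D_succ_succ (i + 1) j] at h₁
  refine le_of_mul_le_mul_left ?_ (add_pos (D_pos (i + 1) (j + 1)) (D_pos (i + 1) j))
  linear_combination D (i + 1) (j + 1) * h₁ + D (i + 2) j * h₀

theorem stmt17 (n k : ℕ) (hk : 0 < k) (hn : k < n) :
    D (n + 1) (k - 1) * D (n - 1) (k + 1) ≤ D n k ^ 2 ∧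
      D n (k - 1) * D n (k + 1) ≤ D n k ^ 2 := by
  obtain ⟨j, rfl⟩ : ∃ j, k = j + 1 := ⟨k - 1, by omega⟩
  obtain ⟨i, rfl⟩ : ∃ i, n = i + 1 := ⟨n - 1, by omega⟩
  exact ⟨D_mul_le_sq_antidiag i j, D_mul_le_sq_row (i + 1) j⟩
end
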